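/- arXiv:math/0607730 — 2 statements merged into one kernel-verified Lean document; each statement's English description precedes it below -/
import Mathlib

section
/- Let φ be an Orlicz function. The following conditions are equivalent: (1) the Cesàro–Orlicz sequence space ces_φ contains a nonzero element; (2) there exists n₁ ∈ ℕ such that ∑_{n=n₁}^∞ φ(1/n) < ∞; (3) for every k > 0 there exists n_k ∈ ℕ such that ∑_{n=n_k}^∞ φ(k/n) < ∞. -/
open scoped ENNReal
open Filter

/-- An Orlicz function: `φ : ℝ → [0,∞]` even, convex, left continuous on `ℝ₊`,
continuous at zero, with `φ 0 = 0` and `φ u → ∞` as `u → ∞`. -/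
structure OrliczFunction where
  toFun : ℝ → ℝ≥0∞
  even' : ∀ u : ℝ, toFun (-u) = toFun u
  convex' : ∀ u v t : ℝ, 0 ≤ t → t ≤ 1 →
    toFun (t * u + (1 - t) * v) ≤ ENNReal.ofReal t * toFun u + ENNReal.ofReal (1 - t) * toFun v
  map_zero' : toFun 0 = 0
  leftContinuous' : ∀ t : ℝ, 0 < t → Tendsto toFun (nhdsWithin t (Set.Iio t)) (nhds (toFun t))
  continuousAtZero' : Tendsto toFun (nhds 0) (nhds 0)
  tendsto_top' : Tendsto toFun atTop (nhds ⊤)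

/-- The Cesàro mean `σx(n) = (1/n) ∑_{j=1}^n |x j|` (with `0`-based indexing). -/
noncomputable def cesaroMean (x : ℕ → ℝ) (n : ℕ) : ℝ :=
  (∑ j ∈ Finset.range (n + 1), |x j|) / (n + 1)

/-- The modular `ρ_φ(x) = ∑_i φ(σx(i))`. -/
noncomputable def rho (φ : OrliczFunction) (x : ℕ → ℝ) : ℝ≥0∞ :=
  ∑' n : ℕ, φ.toFun (cesaroMean x n)

/-- The Cesàro–Orlicz sequence space `ces_φ`. -/
def cesOrlicz (φ : OrliczFunction) : Set (ℕ → ℝ) :=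
  {x | ∃ lam : ℝ, 0 < lam ∧ rho φ (fun i => lam * x i) < ⊤}

/-- The Luxemburg norm `‖x‖_φ = inf {λ > 0 : ρ_φ(x/λ) ≤ 1}`. -/
noncomputable def luxNorm (φ : OrliczFunction) (x : ℕ → ℝ) : ℝ :=
  sInf {lam : ℝ | 0 < lam ∧ rho φ (fun i => x i / lam) ≤ 1}

/-- The subspace `A_φ` of `ces_φ`. -/
def Aphi (φ : OrliczFunction) : Set (ℕ → ℝ) :=
  {x | x ∈ cesOrlicz φ ∧ ∀ k : ℝ, 0 < k → ∃ nk : ℕ,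
    ∑' n : ℕ, φ.toFun ((k / ((nk + n + 1 : ℕ) : ℝ)) * ∑ i ∈ Finset.range (nk + n + 1), |x i|) < ⊤}

/-- `∃ n₁, ∑_{n=n₁}^∞ φ(1/n) < ∞`. -/
def TailFinite (φ : OrliczFunction) : Prop :=
  ∃ n₁ : ℕ, ∑' n : ℕ, φ.toFun (((n₁ + n + 1 : ℕ) : ℝ)⁻¹) < ⊤

/-- The `Δ₂`-condition at zero. -/
def Delta2Zero (φ : OrliczFunction) : Prop :=
  ∃ K : ℝ, 0 < K ∧ ∃ a : ℝ, 0 < a ∧ 0 < φ.toFun a ∧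
    ∀ u : ℝ, 0 ≤ u → u ≤ a → φ.toFun (2 * u) ≤ ENNReal.ofReal K * φ.toFun u

/-- `φ` takes only finite values. -/
def FiniteValued (φ : OrliczFunction) : Prop := ∀ u : ℝ, φ.toFun u ≠ ⊤

/-! If `x ∈ ces_φ` has `x j ≠ 0`, then `σ(λx)(n) ≥ λ|x j|/n` for `n > j`, so a tail of
`∑ φ(c/n)` is finite for some `c > 0`; this propagates to every `k > 0` by repeating each term
`⌈k/c⌉` times. Conversely, a finite tail of `∑ φ(1/n)` puts the first unit vector `e` in
`ces_φ`: `σ(λe)(n) = λ/n`, and for `λ ≤ 1` with `φ(λ) < ∞` the finitely many remaining terms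
are finite. -/

namespace OrliczFunction

variable (φ : OrliczFunction)

theorem mono {u v : ℝ} (hu : 0 ≤ u) (huv : u ≤ v) : φ.toFun u ≤ φ.toFun v := by
  rcases (hu.trans huv).eq_or_lt with hv | hv
  · obtain rfl : u = v := le_antisymm huv (hv ▸ hu)
    rfl
  · have ht : u / v ≤ 1 := div_le_one_of_le₀ huv hv.le
    have hconv := φ.convex' v 0 (u / v) (div_nonneg hu hv.le) ht
    rw [mul_zero, add_zero, div_mul_cancel₀ _ hv.ne', φ.map_zero', mul_zero, add_zero] at hconv
    exact hconv.trans (mul_le_of_le_one_left' (ENNReal.ofReal_le_one.2 ht))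

theorem exists_pos_le_one_lt_top : ∃ t : ℝ, 0 < t ∧ t ≤ 1 ∧ φ.toFun t < ⊤ := by
  have hfin : ∀ᶠ t in nhdsWithin 0 (Set.Ioi 0), φ.toFun t < ⊤ :=
    (φ.continuousAtZero'.eventually (gt_mem_nhds ENNReal.zero_lt_top)).filter_mono
      nhdsWithin_le_nhds
  obtain ⟨t, ht, h0, h1⟩ := (hfin.and (Ioo_mem_nhdsGT one_pos)).exists
  exact ⟨t, h0, h1.le, ht⟩

end OrliczFunction

theorem ENNReal.tsum_comp_nat_div (g : ℕ → ℝ≥0∞) {K : ℕ} (hK : K ≠ 0) :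
    ∑' n : ℕ, g (n / K) = K * ∑' n, g n := by
  have : NeZero K := ⟨hK⟩
  calc ∑' n : ℕ, g (n / K) = ∑' p : ℕ × Fin K, g p.1 :=
        (Nat.divModEquiv K).tsum_eq (fun p => g p.1)
    _ = ∑' (q : ℕ) (_ : Fin K), g q := ENNReal.tsum_prod (f := fun q (_ : Fin K) => g q)
    _ = K * ∑' n, g n := by simp [ENNReal.tsum_mul_left]

theorem abs_div_le_cesaroMean (x : ℕ → ℝ) {j n : ℕ} (hjn : j ≤ n) :
    |x j| / (n + 1) ≤ cesaroMean x n :=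
  div_le_div_of_nonneg_right
    (Finset.single_le_sum (fun i _ => abs_nonneg (x i))
      (Finset.mem_range.2 (Nat.lt_succ_of_le hjn)))
    (by positivity)

theorem cesaroMean_const_mul_single_zero (lam : ℝ) (n : ℕ) :
    cesaroMean (fun i => lam * (Pi.single 0 1 : ℕ → ℝ) i) n = |lam| / (n + 1) := by
  simp [cesaroMean, Pi.single_apply, apply_ite (fun t : ℝ => |t|)]

def TailFiniteAt (φ : OrliczFunction) (c : ℝ) : Prop :=
  ∃ N : ℕ, ∑' n : ℕ, φ.toFun (c / ((N + n + 1 : ℕ) : ℝ)) < ⊤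

theorem tailFiniteAt_one_iff {φ : OrliczFunction} : TailFiniteAt φ 1 ↔ TailFinite φ := by
  simp only [TailFiniteAt, TailFinite, one_div]

-- With `K ≥ k / c`, the `n`-th term of the shifted `k`-series is at most the `(n / K)`-th term
-- of the `c`-series, and each of those is hit exactly `K` times.
theorem TailFiniteAt.of_pos {φ : OrliczFunction} {c : ℝ} (h : TailFiniteAt φ c) (hc : 0 < c)
    {k : ℝ} (hk : 0 < k) : TailFiniteAt φ k := by
  obtain ⟨N, hN⟩ := h
  set K : ℕ := max ⌈k / c⌉₊ 1
  have hK : K ≠ 0 := by positivity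
  have hkK : k ≤ K * c := by
    rw [← div_le_iff₀ hc]
    exact (Nat.le_ceil _).trans (by exact_mod_cast le_max_left _ _)
  set g : ℕ → ℝ≥0∞ := fun q => φ.toFun (c / ((N + q + 1 : ℕ) : ℝ))
  refine ⟨K * (N + 1), ?_⟩
  have hterm : ∀ n : ℕ, φ.toFun (k / ((K * (N + 1) + n + 1 : ℕ) : ℝ)) ≤ g (n / K) := by
    intro n
    refine φ.mono (by positivity) ?_
    have hden : K * (N + n / K + 1) ≤ K * (N + 1) + n + 1 := by
      have := Nat.div_mul_le_self n K
      calc K * (N + n / K + 1) = K * (N + 1) + n / K * K := by ring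
        _ ≤ K * (N + 1) + n + 1 := by omega
    rw [div_le_div_iff₀ (by positivity) (by positivity)]
    calc k * ((N + n / K + 1 : ℕ) : ℝ) ≤ c * ((K * (N + n / K + 1) : ℕ) : ℝ) := by
          push_cast; nlinarith [hkK]
      _ ≤ c * ((K * (N + 1) + n + 1 : ℕ) : ℝ) := by gcongr
  calc ∑' n : ℕ, φ.toFun (k / ((K * (N + 1) + n + 1 : ℕ) : ℝ))
      ≤ ∑' n : ℕ, g (n / K) := ENNReal.tsum_le_tsum hterm
    _ = K * ∑' q : ℕ, g q := ENNReal.tsum_comp_nat_div g hK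
    _ < ⊤ := ENNReal.mul_lt_top (ENNReal.natCast_lt_top K) hN

theorem exists_tailFiniteAt_of_mem_cesOrlicz {φ : OrliczFunction} {x : ℕ → ℝ}
    (hx : x ∈ cesOrlicz φ) (hx0 : x ≠ 0) : ∃ c > 0, TailFiniteAt φ c := by
  obtain ⟨lam, hlam, hρ⟩ := hx
  obtain ⟨j, hj⟩ := Function.ne_iff.1 hx0
  refine ⟨|lam * x j|, abs_pos.2 (mul_ne_zero hlam.ne' hj), j, ?_⟩
  have hterm : ∀ n : ℕ, φ.toFun (|lam * x j| / ((j + n + 1 : ℕ) : ℝ)) ≤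
      φ.toFun (cesaroMean (fun i => lam * x i) (j + n)) := by
    intro n
    have := abs_div_le_cesaroMean (fun i => lam * x i) (Nat.le_add_right j n)
    exact φ.mono (by positivity) (by exact_mod_cast this)
  calc ∑' n : ℕ, φ.toFun (|lam * x j| / ((j + n + 1 : ℕ) : ℝ))
      ≤ ∑' n : ℕ, φ.toFun (cesaroMean (fun i => lam * x i) (j + n)) :=
        ENNReal.tsum_le_tsum hterm
    _ ≤ rho φ (fun i => lam * x i) :=
        ENNReal.tsum_comp_le_tsum_of_injective (add_right_injective j) _
    _ < ⊤ := hρ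

theorem single_mem_cesOrlicz {φ : OrliczFunction} (h : TailFiniteAt φ 1) :
    Pi.single 0 1 ∈ cesOrlicz φ := by
  obtain ⟨N, hN⟩ := h
  obtain ⟨lam, hlam, hlam1, hφlam⟩ := φ.exists_pos_le_one_lt_top
  refine ⟨lam, hlam, ?_⟩
  simp only [rho, cesaroMean_const_mul_single_zero, abs_of_pos hlam]
  rw [← ENNReal.summable.sum_add_tsum_nat_add' (k := N)]
  refine ENNReal.add_lt_top.2 ⟨ENNReal.sum_lt_top.2 fun i _ => ?_, ?_⟩
  · exact (φ.mono (by positivity) (div_le_self hlam.le (by simp))).trans_lt hφlam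
  · refine lt_of_le_of_lt (ENNReal.tsum_le_tsum fun n => φ.mono (by positivity) ?_) hN
    rw [show ((N + n + 1 : ℕ) : ℝ) = ((n + N : ℕ) : ℝ) + 1 by push_cast; ring]
    gcongr

/-- The Cesàro–Orlicz space `ces_φ` is nontrivial iff
`∑_{n=n₁}^∞ φ(1/n) < ∞` for some `n₁` iff `∀ k > 0, ∑_{n=n_k}^∞ φ(k/n) < ∞` for some `n_k`. -/
theorem stmt_0 (φ : OrliczFunction) :
    List.TFAE [
      ∃ x ∈ cesOrlicz φ, x ≠ 0,
      ∃ n₁ : ℕ, ∑' n : ℕ, φ.toFun (((n₁ + n + 1 : ℕ) : ℝ)⁻¹) < ⊤,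
      ∀ k : ℝ, 0 < k → ∃ nk : ℕ, ∑' n : ℕ, φ.toFun (k / ((nk + n + 1 : ℕ) : ℝ)) < ⊤ ] := by
  tfae_have 1 → 3 := by
    rintro ⟨x, hx, hx0⟩ k hk
    obtain ⟨c, hc, htail⟩ := exists_tailFiniteAt_of_mem_cesOrlicz hx hx0
    exact htail.of_pos hc hk
  tfae_have 3 → 2 := fun h => tailFiniteAt_one_iff.1 (h 1 one_pos)
  tfae_have 2 → 1 := fun h =>
    ⟨Pi.single 0 1, single_mem_cesOrlicz (tailFiniteAt_one_iff.2 h), by simp⟩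
  tfae_finish
end

section
/- Fatou property of ces_φ: Let φ be an Orlicz function, let x ∈ ℝ^ℕ and let (x_n) be a sequence of elements of ces_φ with 0 ≤ x_n(i) ≤ x_{n+1}(i) for all n, i, such that x_n(i) → x(i) as n → ∞ for every i ∈ ℕ, and sup_n ‖x_n‖_φ < ∞. Then x ∈ ces_φ and ‖x_n‖_φ → ‖x‖_φ. -/
open scoped ENNReal
open Filter

/-!
The norms `‖xₙ‖_φ` increase to `M := supₙ ‖xₙ‖_φ`. For `l > M` every `ρ_φ(xₙ / l)` is at most `1`.
The Cesàro means of `xₙ / l` increase to those of `x / l`, so by left continuity of `φ` the terms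
of `ρ_φ(xₙ / l)` converge to those of `ρ_φ(x / l)`, and Fatou's lemma for series gives
`ρ_φ(x / l) ≤ 1`. Hence `x ∈ ces_φ` and `‖x‖_φ ≤ M`, while `‖xₙ‖_φ ≤ ‖x‖_φ` because the norm is
monotone.
-/

open scoped Topology

theorem ENNReal.tsum_le_of_tendsto_of_tsum_le {α ι : Type*} {l : Filter ι} [l.NeBot]
    {f : ι → α → ℝ≥0∞} {g : α → ℝ≥0∞} {c : ℝ≥0∞}
    (hlim : ∀ a, Tendsto (fun n => f n a) l (𝓝 (g a))) (hle : ∀ n, ∑' a, f n a ≤ c) :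
    ∑' a, g a ≤ c := by
  rw [ENNReal.tsum_eq_iSup_sum]
  refine iSup_le fun s => le_of_tendsto (tendsto_finsetSum s fun a _ => hlim a) ?_
  exact Eventually.of_forall fun n => (ENNReal.sum_le_tsum s).trans (hle n)

namespace OrliczFunction

variable (φ : OrliczFunction)

theorem apply_mul_le {t : ℝ} (ht₀ : 0 ≤ t) (ht₁ : t ≤ 1) (v : ℝ) :
    φ.toFun (t * v) ≤ ENNReal.ofReal t * φ.toFun v := by
  simpa [φ.map_zero'] using φ.convex' v 0 t ht₀ ht₁

theorem monotoneOn : MonotoneOn φ.toFun (Set.Ici 0) := by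
  intro u (hu : 0 ≤ u) v _ huv
  rcases (hu.trans huv).eq_or_lt with rfl | hv
  · rw [le_antisymm huv hu]
  have hq : u / v ≤ 1 := (div_le_one hv).2 huv
  calc φ.toFun u = φ.toFun (u / v * v) := by rw [div_mul_cancel₀ u hv.ne']
    _ ≤ ENNReal.ofReal (u / v) * φ.toFun v := φ.apply_mul_le (div_nonneg hu hv.le) hq v
    _ ≤ φ.toFun v := mul_le_of_le_one_left' (ENNReal.ofReal_le_one.2 hq)

theorem tendsto_apply_of_monotone {u : ℕ → ℝ} {t : ℝ} (hu : Monotone u)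
    (hlim : Tendsto u atTop (𝓝 t)) (ht : 0 ≤ t) :
    Tendsto (fun n => φ.toFun (u n)) atTop (𝓝 (φ.toFun t)) := by
  rcases ht.eq_or_lt with rfl | ht
  · rw [φ.map_zero']
    exact φ.continuousAtZero'.comp hlim
  have hleft : ContinuousWithinAt φ.toFun (Set.Iic t) t :=
    continuousWithinAt_Iio_iff_Iic.1 (φ.leftContinuous' t ht)
  exact hleft.tendsto.comp
    (tendsto_nhdsWithin_of_tendsto_nhds_of_eventually_within _ hlim
      (Eventually.of_forall (hu.ge_of_tendsto hlim)))

end OrliczFunction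

theorem cesaroMean_nonneg (y : ℕ → ℝ) (n : ℕ) : 0 ≤ cesaroMean y n := by
  unfold cesaroMean
  positivity

theorem cesaroMean_mono {y z : ℕ → ℝ} (h : ∀ i, |y i| ≤ |z i|) (n : ℕ) :
    cesaroMean y n ≤ cesaroMean z n :=
  div_le_div_of_nonneg_right (Finset.sum_le_sum fun j _ => h j) (by positivity)

theorem cesaroMean_const_mul (c : ℝ) (y : ℕ → ℝ) (n : ℕ) :
    cesaroMean (fun i => c * y i) n = |c| * cesaroMean y n := by
  simp only [cesaroMean, abs_mul, ← Finset.mul_sum, mul_div_assoc]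

theorem tendsto_cesaroMean {ι : Type*} {l : Filter ι} {y : ι → ℕ → ℝ} {z : ℕ → ℝ}
    (hlim : ∀ i, Tendsto (fun n => y n i) l (𝓝 (z i))) (k : ℕ) :
    Tendsto (fun n => cesaroMean (y n) k) l (𝓝 (cesaroMean z k)) :=
  (tendsto_finsetSum _ fun j _ => (hlim j).abs).div_const _

section Modular

variable (φ : OrliczFunction)

theorem rho_mono {y z : ℕ → ℝ} (h : ∀ i, |y i| ≤ |z i|) : rho φ y ≤ rho φ z :=
  ENNReal.tsum_le_tsum fun n =>
    φ.monotoneOn (cesaroMean_nonneg y n) (cesaroMean_nonneg z n) (cesaroMean_mono h n)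

theorem rho_const_mul_le {c : ℝ} (hc₀ : 0 ≤ c) (hc₁ : c ≤ 1) (y : ℕ → ℝ) :
    rho φ (fun i => c * y i) ≤ ENNReal.ofReal c * rho φ y := by
  rw [rho, rho, ← ENNReal.tsum_mul_left]
  refine ENNReal.tsum_le_tsum fun n => ?_
  rw [cesaroMean_const_mul, abs_of_nonneg hc₀]
  exact φ.apply_mul_le hc₀ hc₁ _

theorem rho_le_of_tendsto {y : ℕ → ℕ → ℝ} {z : ℕ → ℝ} {c : ℝ≥0∞}
    (hmono : ∀ i, Monotone fun n => |y n i|) (hlim : ∀ i, Tendsto (fun n => y n i) atTop (𝓝 (z i)))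
    (hle : ∀ n, rho φ (y n) ≤ c) : rho φ z ≤ c := by
  refine ENNReal.tsum_le_of_tendsto_of_tsum_le (l := atTop) (fun k => ?_) hle
  exact φ.tendsto_apply_of_monotone (fun m n hmn => cesaroMean_mono (hmono · hmn) k)
    (tendsto_cesaroMean hlim k) (cesaroMean_nonneg z k)

theorem mem_cesOrlicz_of_rho_div_le_one {y : ℕ → ℝ} {l : ℝ} (hl : 0 < l)
    (h : rho φ (fun i => y i / l) ≤ 1) : y ∈ cesOrlicz φ :=
  ⟨l⁻¹, inv_pos.2 hl, by simpa only [div_eq_inv_mul] using h.trans_lt ENNReal.one_lt_top⟩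

theorem exists_rho_div_le_one {y : ℕ → ℝ} (hy : y ∈ cesOrlicz φ) :
    ∃ μ : ℝ, 0 < μ ∧ rho φ (fun i => y i / μ) ≤ 1 := by
  obtain ⟨lam, hlam, hfin⟩ := hy
  set R : ℝ := (rho φ (fun i => lam * y i)).toReal
  have hR : 0 ≤ R := ENNReal.toReal_nonneg
  have hc₀ : 0 ≤ (R + 1)⁻¹ := by positivity
  have hc₁ : (R + 1)⁻¹ ≤ 1 := inv_le_one_of_one_le₀ (by linarith)
  refine ⟨(R + 1) / lam, by positivity, ?_⟩
  have hrescale : (fun i => y i / ((R + 1) / lam)) = fun i => (R + 1)⁻¹ * (lam * y i) := by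
    funext i
    field_simp
  calc rho φ (fun i => y i / ((R + 1) / lam))
      ≤ ENNReal.ofReal (R + 1)⁻¹ * ENNReal.ofReal R := by
        rw [hrescale, ENNReal.ofReal_toReal hfin.ne]
        exact rho_const_mul_le φ hc₀ hc₁ _
    _ = ENNReal.ofReal ((R + 1)⁻¹ * R) := (ENNReal.ofReal_mul hc₀).symm
    _ ≤ 1 := ENNReal.ofReal_le_one.2 (by rw [inv_mul_le_one₀ (by positivity)]; linarith)

end Modular

section LuxemburgNorm

variable (φ : OrliczFunction)

theorem luxNorm_nonneg (y : ℕ → ℝ) : 0 ≤ luxNorm φ y :=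
  Real.sInf_nonneg fun _ hl => hl.1.le

theorem rho_div_le_one_of_luxNorm_lt {y : ℕ → ℝ} {l : ℝ} (hy : y ∈ cesOrlicz φ)
    (h : luxNorm φ y < l) : rho φ (fun i => y i / l) ≤ 1 := by
  obtain ⟨μ, ⟨hμ, hμρ⟩, hμl⟩ :=
    exists_lt_of_csInf_lt (exists_rho_div_le_one φ hy) h
  refine le_trans (rho_mono φ fun i => ?_) hμρ
  rw [abs_div, abs_div, abs_of_pos hμ, abs_of_pos (hμ.trans hμl)]
  exact div_le_div_of_nonneg_left (abs_nonneg _) hμ hμl.le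

theorem luxNorm_le_of_forall_lt {y : ℕ → ℝ} {M : ℝ} (hM : 0 ≤ M)
    (h : ∀ l, M < l → rho φ (fun i => y i / l) ≤ 1) : luxNorm φ y ≤ M :=
  le_of_forall_gt_imp_ge_of_dense fun l hl =>
    csInf_le ⟨0, fun _ hk => hk.1.le⟩ ⟨hM.trans_lt hl, h l hl⟩

theorem luxNorm_mono {y z : ℕ → ℝ} (h : ∀ i, |y i| ≤ |z i|) (hz : z ∈ cesOrlicz φ) :
    luxNorm φ y ≤ luxNorm φ z := by
  refine csInf_le_csInf ⟨0, fun _ hl => hl.1.le⟩ (exists_rho_div_le_one φ hz) ?_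
  rintro l ⟨hl, hρ⟩
  refine ⟨hl, le_trans (rho_mono φ fun i => ?_) hρ⟩
  rw [abs_div, abs_div]
  exact div_le_div_of_nonneg_right (h i) (abs_nonneg l)

end LuxemburgNorm

/-- Fatou property of `ces_φ`. -/
theorem stmt_3 (φ : OrliczFunction) (x : ℕ → ℝ) (xs : ℕ → ℕ → ℝ)
    (hmem : ∀ n, xs n ∈ cesOrlicz φ)
    (hnonneg : ∀ n i, 0 ≤ xs n i)
    (hmono : ∀ n i, xs n i ≤ xs (n + 1) i)
    (hlim : ∀ i, Tendsto (fun n => xs n i) atTop (nhds (x i)))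
    (hbdd : BddAbove (Set.range fun n => luxNorm φ (xs n))) :
    x ∈ cesOrlicz φ ∧ Tendsto (fun n => luxNorm φ (xs n)) atTop (nhds (luxNorm φ x)) := by
  have hxs : Monotone xs := monotone_nat_of_le_succ hmono
  have hxs_le : ∀ n, xs n ≤ x := hxs.ge_of_tendsto (tendsto_pi_nhds.2 hlim)
  have habs : ∀ {m n}, m ≤ n → ∀ i, |xs m i| ≤ |xs n i| := fun hmn i =>
    abs_le_abs_of_nonneg (hnonneg _ i) (hxs hmn i)
  have hnorm_mono : Monotone fun n => luxNorm φ (xs n) := fun m n hmn =>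
    luxNorm_mono φ (habs hmn) (hmem n)
  set M := ⨆ n, luxNorm φ (xs n)
  have hM : 0 ≤ M := (luxNorm_nonneg φ (xs 0)).trans (le_ciSup hbdd 0)
  have hρ : ∀ l, M < l → rho φ (fun i => x i / l) ≤ 1 := fun l hl =>
    rho_le_of_tendsto φ
      (fun i m n hmn => by simpa only [abs_div] using
        div_le_div_of_nonneg_right (habs hmn i) (abs_nonneg l))
      (fun i => (hlim i).div_const l)
      (fun n => rho_div_le_one_of_luxNorm_lt φ (hmem n) ((le_ciSup hbdd n).trans_lt hl))
  have hx : x ∈ cesOrlicz φ :=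
    mem_cesOrlicz_of_rho_div_le_one φ (by positivity) (hρ (M + 1) (lt_add_one M))
  have hnorm : luxNorm φ x = M :=
    le_antisymm (luxNorm_le_of_forall_lt φ hM hρ) <| ciSup_le fun n =>
      luxNorm_mono φ (fun i => abs_le_abs_of_nonneg (hnonneg n i) (hxs_le n i)) hx
  exact ⟨hx, hnorm ▸ tendsto_atTop_ciSup hnorm_mono hbdd⟩
end
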